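/- Let e, d, h ∈ ℕ. If f⁽¹⁾ is the unique power series root vanishing at 0 of an irreducible polynomial R(x,Z) ∈ k[x,Z] with deg_Z R ≤ d, deg_x R ≤ h, R(0,0)=0 and (∂R/∂Z)(0,0) ≠ 0, and f⁽⁰⁾ ∈ k[x] is any polynomial of degree ≤ e vanishing at 0, then the series f := f⁽⁰⁾ + x^e f⁽¹⁾ satisfies Deg(f) ≤ d and H(f) ≤ h + e·d, i.e. f ∈ A(d, h+ed). Hence 𝔸^e_k + I(d,h) ⊆ A(d, h+ed). -/

import Mathlib

open Polynomial PowerSeries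

/-- Evaluation of `P ∈ k[x][T]` at a power series `f`, substituting `T ↦ f` and
viewing the coefficients (polynomials in `x`) as power series. -/
noncomputable def algEval {k : Type*} [CommRing k]
    (P : Polynomial (Polynomial k)) (f : PowerSeries k) : PowerSeries k :=
  Polynomial.eval₂ (Polynomial.eval₂RingHom (PowerSeries.C (R := k)) PowerSeries.X) f P

/-- `f` is an algebraic power series: a root of a nonzero polynomial in `k[x][T]`. -/
def IsAlgSeries {k : Type*} [CommRing k] (f : PowerSeries k) : Prop :=
  ∃ P : Polynomial (Polynomial k), P ≠ 0 ∧ algEval P f = 0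

/-- `P` is a minimal polynomial of `f`: a generator of the kernel of `Q ↦ Q(x,f)`. -/
def IsMinPolyOf {k : Type*} [CommRing k]
    (P : Polynomial (Polynomial k)) (f : PowerSeries k) : Prop :=
  P ≠ 0 ∧ ∀ Q : Polynomial (Polynomial k), algEval Q f = 0 ↔ P ∣ Q

/-- Height of `P ∈ k[x][T]`: max of the `x`-degrees of its coefficients. -/
noncomputable def htPoly {k : Type*} [CommRing k] (P : Polynomial (Polynomial k)) : ℕ :=
  P.support.sup fun i => (P.coeff i).natDegree

/-- `P(0,0)`. -/
noncomputable def evalOO {k : Type*} [CommRing k] (P : Polynomial (Polynomial k)) : k :=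
  (P.eval 0).eval 0

/-- The set `A(d,h)` of algebraic power series of degree ≤ d and height ≤ h. -/
def setA (k : Type*) [CommRing k] (d h : ℕ) : Set (PowerSeries k) :=
  {f | ∃ P, IsMinPolyOf P f ∧ P.natDegree ≤ d ∧ htPoly P ≤ h}

/-- The set `A(d,h)₀` of series in `A(d,h)` vanishing at `0`. -/
def setA0 (k : Type*) [CommRing k] (d h : ℕ) : Set (PowerSeries k) :=
  {f | PowerSeries.constantCoeff f = 0 ∧ f ∈ setA k d h}

/-- The set `I(d,h)`: members of `A(d,h)₀` whose minimal polynomial satisfies the IFT. -/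
def setI (k : Type*) [CommRing k] (d h : ℕ) : Set (PowerSeries k) :=
  {f | PowerSeries.constantCoeff f = 0 ∧
    ∃ P, IsMinPolyOf P f ∧ P.natDegree ≤ d ∧ htPoly P ≤ h ∧
      evalOO P = 0 ∧ evalOO (Polynomial.derivative P) ≠ 0}

/-- The set `A(d,h,e)`. -/
def setAe (k : Type*) [CommRing k] (d h e : ℕ) : Set (PowerSeries k) :=
  {f | PowerSeries.constantCoeff f = 0 ∧
    ∃ P, IsMinPolyOf P f ∧ P.natDegree ≤ d ∧ htPoly P ≤ h ∧
      (algEval (Polynomial.derivative P) f).order = e}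

/-- The tail `f⁽¹⁾` in the decomposition `f = f⁽⁰⁾ + x^e f⁽¹⁾`. -/
noncomputable def tailPart {k : Type*} [CommRing k] (f : PowerSeries k) (e : ℕ) :
    PowerSeries k :=
  PowerSeries.mk fun n => if n = 0 then 0 else PowerSeries.coeff (n + e) f

/-- The polynomial with coefficient vector `a` : coefficient of `x^i T^j` is `a (i,j)`. -/
noncomputable def polyOf {k : Type*} [CommRing k] {h d : ℕ}
    (a : Fin (h+1) × Fin (d+1) → k) : Polynomial (Polynomial k) :=
  ∑ p : Fin (h+1) × Fin (d+1),
    Polynomial.C (Polynomial.C (a p) * Polynomial.X ^ (p.1 : ℕ)) * Polynomial.X ^ (p.2 : ℕ)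

/-- A Zariski-closed subset of affine space `k^ι`. -/
def IsZarClosed {k : Type*} [CommRing k] {ι : Type*} (s : Set (ι → k)) : Prop :=
  ∃ S : Set (MvPolynomial ι k), s = {x | ∀ p ∈ S, MvPolynomial.eval x p = 0}

/-- Constructible subsets of affine space: the boolean algebra generated by closed sets. -/
inductive IsConstructibleSet {k : Type*} [CommRing k] {ι : Type*} : Set (ι → k) → Prop
  | of_closed (s : Set (ι → k)) : IsZarClosed s → IsConstructibleSet s
  | compl (s : Set (ι → k)) : IsConstructibleSet s → IsConstructibleSet sᶜ
  | union (s t : Set (ι → k)) : IsConstructibleSet s → IsConstructibleSet t →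
      IsConstructibleSet (s ∪ t)

/-- The vanishing ideal of a subset of affine space. -/
noncomputable def vanIdeal {k : Type*} [CommRing k] {ι : Type*} (s : Set (ι → k)) :
    Ideal (MvPolynomial ι k) where
  carrier := {p | ∀ x ∈ s, MvPolynomial.eval x p = 0}
  add_mem' := by intro a b ha hb x hx; simp [map_add, ha x hx, hb x hx]
  zero_mem' := by intro x hx; simp
  smul_mem' := by intro c a ha x hx; simp [ha x hx]

/-- Dimension of (the Zariski closure of) a subset of affine space. -/
noncomputable def dimSet {k : Type*} [CommRing k] {ι : Type*} (s : Set (ι → k)) :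
    WithBot (WithTop ℕ) :=
  ringKrullDim (MvPolynomial ι k ⧸ vanIdeal s)

/-- Height of an ideal: infimum of the dimensions of localizations at primes above it. -/
noncomputable def idealHeight {R : Type*} [CommRing R] (I : Ideal R) : WithBot (WithTop ℕ) :=
  sInf {d | ∃ P : Ideal R, ∃ hP : P.IsPrime, I ≤ P ∧
    ringKrullDim (@Localization.AtPrime R _ P hP) = d}

section AuxMin

variable {k : Type*} [Field k]

open scoped Classical in
noncomputable instance fieldNormalizationMonoid : NormalizationMonoid k where
  normUnit a := if h : a = 0 then 1 else (Units.mk0 a h)⁻¹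
  normUnit_zero := by simp
  normUnit_one := by ext; simp
  normUnit_mul_units := by
    intro a u ha
    ext
    simp only [dif_neg ha, dif_neg (mul_ne_zero ha u.ne_zero)]
    simp [mul_inv, mul_comm]

noncomputable instance polyNGCD : NormalizedGCDMonoid (Polynomial k) :=
  UniqueFactorizationMonoid.toNormalizedGCDMonoid _

/-- The evaluation map as a ring homomorphism. -/
noncomputable def epsHom (f : PowerSeries k) :
    Polynomial (Polynomial k) →+* PowerSeries k :=
  Polynomial.eval₂RingHom
    (Polynomial.eval₂RingHom (PowerSeries.C (R := k)) PowerSeries.X) f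

lemma algEval_eq_epsHom (P : Polynomial (Polynomial k)) (f : PowerSeries k) :
    algEval P f = epsHom f P := rfl

lemma inner_eval_eq_coe (a : Polynomial k) :
    (Polynomial.eval₂RingHom (PowerSeries.C (R := k)) (PowerSeries.X : PowerSeries k)) a
      = (a : PowerSeries k) := by
  simp only [Polynomial.coe_eval₂RingHom, Polynomial.eval₂_C_X_eq_coe]

lemma epsHom_C (f : PowerSeries k) (a : Polynomial k) :
    epsHom f (Polynomial.C a) = (a : PowerSeries k) := by
  rw [epsHom]
  rw [Polynomial.coe_eval₂RingHom, Polynomial.eval₂_C]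
  exact inner_eval_eq_coe a

lemma epsHom_X (f : PowerSeries k) :
    epsHom f Polynomial.X = f := by
  rw [epsHom, Polynomial.coe_eval₂RingHom, Polynomial.eval₂_X]

noncomputable def coeLaurent : Polynomial k →+* LaurentSeries k :=
  (HahnSeries.ofPowerSeries ℤ k).comp
    (Polynomial.eval₂RingHom (PowerSeries.C (R := k)) PowerSeries.X)

lemma coeLaurent_injective : Function.Injective (coeLaurent (k := k)) := by
  have h1 : ⇑(Polynomial.eval₂RingHom (PowerSeries.C (R := k))
      (PowerSeries.X : PowerSeries k)) = fun a : Polynomial k => (a : PowerSeries k) := by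
    funext a; exact inner_eval_eq_coe a
  have h2 : ⇑(coeLaurent (k := k)) = ⇑(HahnSeries.ofPowerSeries ℤ k) ∘
      fun a : Polynomial k => (a : PowerSeries k) := by
    rw [coeLaurent, RingHom.coe_comp, h1]
  rw [h2]
  exact HahnSeries.ofPowerSeries_injective.comp (Polynomial.coe_injective k)

noncomputable def liftK : FractionRing (Polynomial k) →+* LaurentSeries k :=
  IsFractionRing.lift coeLaurent_injective

lemma liftK_algebraMap (a : Polynomial k) :
    liftK (algebraMap (Polynomial k) (FractionRing (Polynomial k)) a) = coeLaurent a :=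
  IsFractionRing.lift_algebraMap coeLaurent_injective a

lemma aeval_laurent (f : PowerSeries k) (Q : Polynomial (Polynomial k)) :
    Polynomial.eval₂ (liftK (k := k)) ((HahnSeries.ofPowerSeries ℤ k) f)
      (Q.map (algebraMap (Polynomial k) (FractionRing (Polynomial k))))
      = (HahnSeries.ofPowerSeries ℤ k) (algEval Q f) := by
  rw [Polynomial.eval₂_map]
  have hcomp : (liftK (k := k)).comp (algebraMap (Polynomial k) (FractionRing (Polynomial k)))
      = coeLaurent := RingHom.ext fun x => liftK_algebraMap x
  rw [hcomp, algEval, Polynomial.hom_eval₂]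
  rfl

/-- Key minimality lemma. -/
lemma isMinPolyOf_of_primitive_irreducible (P : Polynomial (Polynomial k))
    (hprim : P.IsPrimitive)
    (hirr : Irreducible (P.map (algebraMap (Polynomial k) (FractionRing (Polynomial k)))))
    (f : PowerSeries k) (hroot : algEval P f = 0) : IsMinPolyOf P f := by
  have hPne : P ≠ 0 := by
    rintro rfl
    rw [Polynomial.map_zero] at hirr
    exact hirr.ne_zero rfl
  set K := FractionRing (Polynomial k) with hK
  set φ := algebraMap (Polynomial k) K with hφ
  letI : Algebra K (LaurentSeries k) := (liftK (k := k)).toAlgebra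
  have halg : algebraMap K (LaurentSeries k) = liftK := rfl
  set y : LaurentSeries k := (HahnSeries.ofPowerSeries ℤ k) f with hy
  have key : ∀ Q : Polynomial (Polynomial k),
      Polynomial.aeval y (Q.map φ) = (HahnSeries.ofPowerSeries ℤ k) (algEval Q f) := by
    intro Q
    rw [Polynomial.aeval_def, halg, hy]
    exact aeval_laurent f Q
  refine ⟨hPne, fun Q => ⟨fun hQ => ?_, ?_⟩⟩
  · have hPk : Polynomial.aeval y (P.map φ) = 0 := by
      rw [key, hroot, map_zero]
    have hQk : Polynomial.aeval y (Q.map φ) = 0 := by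
      rw [key, hQ, map_zero]
    have hm : minpoly K y ∣ P.map φ := minpoly.dvd K _ hPk
    have hdvdK : P.map φ ∣ Q.map φ := by
      rcases hirr.dvd_iff.mp hm with hu | ha
      · exfalso
        have h0 := minpoly.aeval K y
        have : IsUnit (Polynomial.aeval y (minpoly K y)) :=
          hu.map (Polynomial.aeval y)
        rw [h0] at this
        exact not_isUnit_zero this
      · exact ha.dvd.trans (minpoly.dvd K _ hQk)
    by_cases hQ0 : Q = 0
    · simp [hQ0]
    have hcontne : φ Q.content ≠ 0 := by
      rw [map_ne_zero_iff φ (IsFractionRing.injective _ _)]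
      exact fun hc => hQ0 (Polynomial.content_eq_zero_iff.mp hc)
    have hQfact : Q.map φ = Polynomial.C (φ Q.content) * (Q.primPart.map φ) := by
      conv_lhs => rw [Q.eq_C_content_mul_primPart]
      rw [Polynomial.map_mul, Polynomial.map_C]
    have hdvd2 : P.map φ ∣ Q.primPart.map φ := by
      rw [hQfact] at hdvdK
      exact (IsUnit.dvd_mul_left (Polynomial.isUnit_C.mpr hcontne.isUnit)).mp hdvdK
    have := hprim.dvd_of_fraction_map_dvd_fraction_map
      hdvd2
    exact this.trans Q.primPart_dvd
  · rintro ⟨r, rfl⟩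
    rw [algEval_eq_epsHom, map_mul, ← algEval_eq_epsHom, hroot, zero_mul]

lemma coeff_mul_natDegree_le {p q : Polynomial (Polynomial k)} {a b : ℕ}
    (hp : ∀ j, (p.coeff j).natDegree ≤ a) (hq : ∀ j, (q.coeff j).natDegree ≤ b) :
    ∀ j, (((p * q).coeff j)).natDegree ≤ a + b := by
  intro j
  rw [Polynomial.coeff_mul]
  refine Polynomial.natDegree_sum_le_of_forall_le _ _ ?_
  intro x _
  exact Polynomial.natDegree_mul_le.trans (add_le_add (hp _) (hq _))

lemma coeff_pow_X_sub_C_natDegree_le {c : Polynomial k} {e : ℕ} (hc : c.natDegree ≤ e) :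
    ∀ i j, ((((Polynomial.X - Polynomial.C c) ^ i :
      Polynomial (Polynomial k))).coeff j).natDegree ≤ e * i := by
  have hbase : ∀ j, (((Polynomial.X - Polynomial.C c :
      Polynomial (Polynomial k))).coeff j).natDegree ≤ e := by
    intro j
    rw [Polynomial.coeff_sub, Polynomial.coeff_X, Polynomial.coeff_C]
    rcases j with _ | _ | j
    · simpa using hc
    · simp
    · simp
  intro i
  induction i with
  | zero =>
    intro j
    rw [pow_zero]
    rcases j with _ | j <;> simp [Polynomial.coeff_one]
  | succ i ih =>
    intro j
    rw [pow_succ]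
    have := coeff_mul_natDegree_le ih hbase j
    calc ((((Polynomial.X - Polynomial.C c) ^ i *
          (Polynomial.X - Polynomial.C c) :
            Polynomial (Polynomial k))).coeff j).natDegree ≤ e * i + e := this
      _ = e * (i + 1) := by ring

end AuxMin

/-- `𝔸^e + I(d,h) ⊆ A(d, h + ed)`. -/
theorem stmt_6 {k : Type*} [Field k] (d h e : ℕ)
    (R : Polynomial (Polynomial k)) (hRirr : Irreducible R)
    (hRd : R.natDegree ≤ d) (hRh : htPoly R ≤ h)
    (hR0 : evalOO R = 0) (hR1 : evalOO (Polynomial.derivative R) ≠ 0)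
    (f1 : PowerSeries k) (hf10 : PowerSeries.constantCoeff f1 = 0)
    (hf1 : algEval R f1 = 0)
    (f0 : Polynomial k) (hf0d : f0.natDegree ≤ e) (hf00 : f0.coeff 0 = 0) :
    ((f0 : PowerSeries k) + PowerSeries.X ^ e * f1) ∈ setA k d (h + e * d) := by
  classical
  have hRne : R ≠ 0 := hRirr.ne_zero
  set n := R.natDegree with hn
  set f : PowerSeries k := (f0 : PowerSeries k) + PowerSeries.X ^ e * f1 with hf
  set P₀ : Polynomial (Polynomial k) :=
    ∑ i ∈ Finset.range (n + 1),
      Polynomial.C (R.coeff i * Polynomial.X ^ (e * (n - i))) *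
        (Polynomial.X - Polynomial.C f0) ^ i with hP₀
  -- coefficient degrees of R
  have hR_coeff_deg : ∀ i, (R.coeff i).natDegree ≤ h := by
    intro i
    by_cases hi : i ∈ R.support
    · exact le_trans (Finset.le_sup (f := fun i => (R.coeff i).natDegree) hi) hRh
    · rw [Polynomial.notMem_support_iff.mp hi]
      simp
  -- STEP B : P₀ has root f
  have hXsub : epsHom f (Polynomial.X - Polynomial.C f0) = PowerSeries.X ^ e * f1 := by
    rw [map_sub, epsHom_X, epsHom_C, hf]
    ring
  have hP₀root : algEval P₀ f = 0 := by
    rw [algEval_eq_epsHom, hP₀, map_sum]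
    have hterm : ∀ i ∈ Finset.range (n + 1),
        epsHom f (Polynomial.C (R.coeff i * Polynomial.X ^ (e * (n - i))) *
          (Polynomial.X - Polynomial.C f0) ^ i)
        = PowerSeries.X ^ (e * n) * (((R.coeff i : Polynomial k) : PowerSeries k) * f1 ^ i) := by
      intro i hi
      have hi' : i ≤ n := Nat.lt_succ_iff.mp (Finset.mem_range.mp hi)
      rw [map_mul, map_pow, hXsub, epsHom_C, Polynomial.coe_mul, Polynomial.coe_pow,
        Polynomial.coe_X, mul_pow, ← pow_mul]
      have hpow : (PowerSeries.X : PowerSeries k) ^ (e * (n - i)) * PowerSeries.X ^ (e * i)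
          = PowerSeries.X ^ (e * n) := by
        rw [← pow_add, ← Nat.mul_add, Nat.sub_add_cancel hi']
      rw [← hpow]
      ring
    rw [Finset.sum_congr rfl hterm, ← Finset.mul_sum]
    have hsum : ∑ i ∈ Finset.range (n + 1),
        ((R.coeff i : Polynomial k) : PowerSeries k) * f1 ^ i = algEval R f1 := by
      rw [algEval, Polynomial.eval₂_eq_sum_range]
      exact Finset.sum_congr rfl fun i _ => by rw [inner_eval_eq_coe]
    rw [hsum, hf1, mul_zero]
  -- STEP C : coefficient n of P₀
  have hmono : ∀ i : ℕ,
      ((Polynomial.X - Polynomial.C f0 : Polynomial (Polynomial k)) ^ i).natDegree = i := by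
    intro i
    rw [Polynomial.natDegree_pow, Polynomial.natDegree_X_sub_C, mul_one]
  have hcoeffn : P₀.coeff n = R.coeff n := by
    rw [hP₀, Polynomial.finset_sum_coeff, Finset.sum_eq_single n]
    · rw [Polynomial.coeff_C_mul]
      have h1 : ((Polynomial.X - Polynomial.C f0 : Polynomial (Polynomial k)) ^ n).coeff n
          = 1 := by
        have hco := ((Polynomial.monic_X_sub_C f0).pow n).coeff_natDegree
        rwa [hmono n] at hco
      rw [h1, mul_one, Nat.sub_self, Nat.mul_zero, pow_zero, mul_one]
    · intro i hi hne
      rw [Polynomial.coeff_C_mul]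
      have h0 : ((Polynomial.X - Polynomial.C f0 : Polynomial (Polynomial k)) ^ i).coeff n
          = 0 := by
        apply Polynomial.coeff_eq_zero_of_natDegree_lt
        rw [hmono]
        exact lt_of_le_of_ne (Nat.lt_succ_iff.mp (Finset.mem_range.mp hi)) hne
      rw [h0, mul_zero]
    · intro hnotin
      exact absurd (Finset.self_mem_range_succ n) hnotin
  have hP₀ne : P₀ ≠ 0 := by
    intro h0
    apply Polynomial.leadingCoeff_ne_zero.mpr hRne
    rw [Polynomial.leadingCoeff, ← hn, ← hcoeffn, h0, Polynomial.coeff_zero]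
  -- STEP D : degree bound for P₀
  have hdegP₀ : P₀.natDegree ≤ n := by
    rw [hP₀]
    refine Polynomial.natDegree_sum_le_of_forall_le _ _ ?_
    intro i hi
    refine Polynomial.natDegree_mul_le.trans ?_
    rw [Polynomial.natDegree_C, hmono, zero_add]
    exact Nat.lt_succ_iff.mp (Finset.mem_range.mp hi)
  -- STEP E : height bound for P₀
  have hcoeffbound : ∀ j, (P₀.coeff j).natDegree ≤ h + e * n := by
    intro j
    rw [hP₀, Polynomial.finset_sum_coeff]
    refine Polynomial.natDegree_sum_le_of_forall_le _ _ ?_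
    intro i hi
    have hi' : i ≤ n := Nat.lt_succ_iff.mp (Finset.mem_range.mp hi)
    rw [Polynomial.coeff_C_mul]
    refine Polynomial.natDegree_mul_le.trans ?_
    have h1 : (R.coeff i * Polynomial.X ^ (e * (n - i))).natDegree ≤ h + e * (n - i) :=
      Polynomial.natDegree_mul_le.trans
        (add_le_add (hR_coeff_deg i) (Polynomial.natDegree_X_pow _).le)
    have h2 := coeff_pow_X_sub_C_natDegree_le hf0d i j
    have h3 : e * (n - i) + e * i = e * n := by rw [← Nat.mul_add, Nat.sub_add_cancel hi']
    omega
  -- STEP F : primitive part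
  set P := P₀.primPart with hP
  have hPdeg : P.natDegree ≤ d := by
    rw [hP, Polynomial.natDegree_primPart]
    exact hdegP₀.trans hRd
  have hcontne : P₀.content ≠ 0 := fun hc => hP₀ne (Polynomial.content_eq_zero_iff.mp hc)
  have hht : htPoly P ≤ h + e * d := by
    rw [htPoly]
    refine Finset.sup_le ?_
    intro j hj
    have hPj : P.coeff j ≠ 0 := Polynomial.mem_support_iff.mp hj
    have heq : P₀.coeff j = P₀.content * P.coeff j := by
      conv_lhs => rw [P₀.eq_C_content_mul_primPart]
      rw [Polynomial.coeff_C_mul]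
    have hdeg := hcoeffbound j
    rw [heq, Polynomial.natDegree_mul hcontne hPj] at hdeg
    have hen : e * n ≤ e * d := Nat.mul_le_mul_left e hRd
    omega
  -- STEP G : R is primitive
  have hRprim : R.IsPrimitive := by
    intro r hr
    obtain ⟨s, hs⟩ := hr
    rcases hRirr.isUnit_or_isUnit hs with hu | hu
    · exact Polynomial.isUnit_C.mp hu
    · exfalso
      obtain ⟨u, hu', hcu⟩ := Polynomial.isUnit_iff.mp hu
      have hRC : R = Polynomial.C (r * u) := by rw [hs, ← hcu, ← Polynomial.C_mul]
      have hcoe : ((r * u : Polynomial k) : PowerSeries k) = 0 := by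
        rw [← epsHom_C f1, ← hRC, ← algEval_eq_epsHom, hf1]
      have hro : r = 0 ∨ u = 0 := by simpa using hcoe
      rcases hro with hr0 | hu0
      · rw [hr0, zero_mul, Polynomial.C_0] at hRC
        exact hRne hRC
      · exact hu'.ne_zero hu0
  -- STEP H : irreducibility over the fraction field
  set K := FractionRing (Polynomial k) with hKdef
  set φ := algebraMap (Polynomial k) K with hφ
  have hφinj : Function.Injective φ := IsFractionRing.injective _ _
  have hRk : Irreducible (R.map φ) :=
    hRprim.irreducible_iff_irreducible_map_fraction_map.mp hRirr
  set xK : K := φ Polynomial.X with hxK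
  have hxKne : xK ≠ 0 := by
    rw [hxK, map_ne_zero_iff φ hφinj]
    exact Polynomial.X_ne_zero
  set a : K := (xK ^ e)⁻¹ with ha
  have hane : a ≠ 0 := inv_ne_zero (pow_ne_zero e hxKne)
  set b : K := -(a * φ f0) with hb
  letI := invertibleOfNonzero hane
  set ψ := Polynomial.algEquivCMulXAddC a b with hψ
  have hg : (Polynomial.C a * Polynomial.X + Polynomial.C b : Polynomial K)
      = Polynomial.C a * (Polynomial.X - Polynomial.C (φ f0)) := by
    rw [hb, map_neg, Polynomial.C_mul]
    ring
  have hψR : ψ (R.map φ) = (R.map φ).comp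
      (Polynomial.C a * Polynomial.X + Polynomial.C b) := by
    rw [hψ, Polynomial.algEquivCMulXAddC_apply, ← Polynomial.comp_eq_aeval]
  have hmapP₀ : P₀.map φ = Polynomial.C (xK ^ (e * n)) * ψ (R.map φ) := by
    have hL : P₀.map φ = ∑ i ∈ Finset.range (n + 1),
        Polynomial.C (φ (R.coeff i) * xK ^ (e * (n - i))) *
          (Polynomial.X - Polynomial.C (φ f0)) ^ i := by
      rw [hP₀, Polynomial.map_sum]
      refine Finset.sum_congr rfl fun i _ => ?_
      rw [Polynomial.map_mul, Polynomial.map_pow, Polynomial.map_sub, Polynomial.map_X,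
        Polynomial.map_C, Polynomial.map_C, map_mul, map_pow, ← hxK]
    have hcompsum : (R.map φ).comp (Polynomial.C a * Polynomial.X + Polynomial.C b)
        = ∑ i ∈ Finset.range (n + 1), Polynomial.C ((R.map φ).coeff i) *
            (Polynomial.C a * Polynomial.X + Polynomial.C b) ^ i := by
      rw [Polynomial.comp]
      exact Polynomial.eval₂_eq_sum_range'
        (Polynomial.C : K →+* Polynomial K)
        (lt_of_le_of_lt Polynomial.natDegree_map_le (Nat.lt_succ_self n)) _
    rw [hψR, hcompsum, hL, Finset.mul_sum]
    refine Finset.sum_congr rfl fun i hi => ?_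
    have hi' : i ≤ n := Nat.lt_succ_iff.mp (Finset.mem_range.mp hi)
    rw [hg, Polynomial.coeff_map, mul_pow, ← Polynomial.C_pow]
    have hxpow : (xK : K) ^ (e * (n - i)) = xK ^ (e * n) * a ^ i := by
      rw [ha, inv_pow, ← pow_mul]
      have h3 : e * (n - i) + e * i = e * n := by rw [← Nat.mul_add, Nat.sub_add_cancel hi']
      have h4 : xK ^ (e * n) = xK ^ (e * (n - i)) * xK ^ (e * i) := by rw [← pow_add, h3]
      rw [h4, mul_assoc, mul_inv_cancel₀ (pow_ne_zero _ hxKne), mul_one]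
    rw [Polynomial.C_mul, hxpow, Polynomial.C_mul]
    ring
  have hP₀kirr : Irreducible (P₀.map φ) := by
    rw [hmapP₀]
    have hunit : IsUnit (Polynomial.C (xK ^ (e * n)) : Polynomial K) :=
      Polynomial.isUnit_C.mpr (pow_ne_zero _ hxKne).isUnit
    rw [irreducible_isUnit_mul hunit]
    exact (MulEquiv.irreducible_iff ψ).mpr hRk
  have hPkirr : Irreducible (P.map φ) := by
    have hfact : P₀.map φ = Polynomial.C (φ P₀.content) * P.map φ := by
      conv_lhs => rw [P₀.eq_C_content_mul_primPart]
      rw [Polynomial.map_mul, Polynomial.map_C]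
    have hφcont : φ P₀.content ≠ 0 := by
      rw [map_ne_zero_iff φ hφinj]; exact hcontne
    have hcu : IsUnit (Polynomial.C (φ P₀.content) : Polynomial K) :=
      Polynomial.isUnit_C.mpr hφcont.isUnit
    rw [hfact, irreducible_isUnit_mul hcu] at hP₀kirr
    exact hP₀kirr
  -- STEP I : root of P
  have hProot : algEval P f = 0 := by
    have h1 : algEval P₀ f = ((P₀.content : Polynomial k) : PowerSeries k) * algEval P f := by
      rw [algEval_eq_epsHom, algEval_eq_epsHom]
      conv_lhs => rw [P₀.eq_C_content_mul_primPart]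
      rw [map_mul, epsHom_C]
    rw [hP₀root] at h1
    have hcne : ((P₀.content : Polynomial k) : PowerSeries k) ≠ 0 := by
      intro hc
      exact hcontne (by simpa using hc)
    rcases mul_eq_zero.mp h1.symm with hcz | hz
    · exact absurd hcz hcne
    · exact hz
  exact ⟨P, isMinPolyOf_of_primitive_irreducible P P₀.isPrimitive_primPart hPkirr f hProot,
    hPdeg, hht⟩
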